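/- Let G be the topological group circle × ℝ, where circle is the multiplicative group of unit complex numbers, and let H be the subgroup of G generated by the single element (−1, π). Then the quotient topological group G / H is homeomorphic to circle × circle, i.e. to the 2-dimensional torus. -/

import Mathlib

/-!
The continuous homomorphism `(z, t) ↦ (z e^{-it}, e^{2it})` from the cylinder onto the torus has
kernel `{((-1)ⁿ, nπ) | n ∈ ℤ}`, the subgroup generated by `(-1, π)`. A surjective continuous
homomorphism from a σ-compact group onto a locally compact group is open, hence a quotient map,
so it descends to a homeomorphism from the quotient onto the torus.
-/

/-- The element `-1` of the circle group. -/
noncomputable def negOneCircle : Circle :=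
  ⟨(-1 : ℂ), by simp [Submonoid.unitSphere, Metric.mem_sphere]⟩

open Real Topology

noncomputable def MonoidHom.quotientKerHomeomorph {G H : Type*} [Group G] [Group H]
    [TopologicalSpace G] [TopologicalSpace H] (f : G →* H) (hf : IsQuotientMap f) :
    G ⧸ f.ker ≃ₜ H :=
  let e := QuotientGroup.quotientKerEquivOfSurjective f hf.surjective
  IsHomeomorph.homeomorph e <| isHomeomorph_iff_isQuotientMap_injective.2
    ⟨(QuotientGroup.isQuotientMap_mk f.ker).of_comp_isQuotientMap hf, e.injective⟩

lemma Circle.exp_pi : Circle.exp π = negOneCircle :=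
  Circle.ext Complex.exp_pi_mul_I

lemma zpow_exp_ofAdd (x : ℝ) (n : ℤ) :
    ((Circle.exp x, Multiplicative.ofAdd x) : Circle × Multiplicative ℝ) ^ n =
      (Circle.exp (n * x), Multiplicative.ofAdd (n * x)) := by
  rw [Prod.pow_mk, ← Circle.exp_intCast_mul, ← ofAdd_zsmul, zsmul_eq_mul]

noncomputable def torusCover : Circle × Multiplicative ℝ →* Circle × Circle where
  toFun p := (p.1 / Circle.exp p.2.toAdd, Circle.exp (2 * p.2.toAdd))
  map_one' := by simp
  map_mul' a b := by
    ext
    · simp [Circle.exp_add, mul_div_mul_comm]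
    · simp [mul_add, Circle.exp_add]

lemma continuous_torusCover : Continuous torusCover := by
  change Continuous fun p : Circle × Multiplicative ℝ =>
    (p.1 / Circle.exp p.2.toAdd, Circle.exp (2 * p.2.toAdd))
  fun_prop

lemma surjective_torusCover : Function.Surjective torusCover := by
  rintro ⟨a, b⟩
  obtain ⟨t, rfl⟩ := Circle.exp_surjective b
  refine ⟨(a * Circle.exp (t / 2), Multiplicative.ofAdd (t / 2)), ?_⟩
  simp [torusCover, mul_div_cancel₀]

lemma isQuotientMap_torusCover : IsQuotientMap torusCover :=
  have : SigmaCompactSpace (Multiplicative ℝ) := inferInstanceAs (SigmaCompactSpace ℝ)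
  (torusCover.isOpenMap_of_sigmaCompact surjective_torusCover continuous_torusCover).isQuotientMap
    continuous_torusCover surjective_torusCover

lemma torusCover_ker :
    torusCover.ker = Subgroup.zpowers ((negOneCircle, Multiplicative.ofAdd π) :
      Circle × Multiplicative ℝ) := by
  ext ⟨z, t⟩
  obtain ⟨s, rfl⟩ := Multiplicative.ofAdd.surjective t
  simp only [MonoidHom.mem_ker, Subgroup.mem_zpowers_iff, ← Circle.exp_pi, zpow_exp_ofAdd]
  simp only [torusCover, MonoidHom.coe_mk, OneHom.coe_mk, toAdd_ofAdd, Prod.ext_iff,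
    Prod.fst_one, Prod.snd_one, div_eq_one, Circle.exp_eq_one, EmbeddingLike.apply_eq_iff_eq]
  constructor
  · rintro ⟨rfl, n, hn⟩
    obtain rfl : s = n * π := by linarith
    exact ⟨n, rfl, rfl⟩
  · rintro ⟨n, rfl, rfl⟩
    exact ⟨rfl, n, by ring⟩

/-- Let `G` be the topological group `circle × ℝ` and let `H` be the subgroup
generated by the single element `(-1, π)`.  Then the quotient topological group `G / H` is
homeomorphic to `circle × circle`, i.e. to the 2-dimensional torus. -/
theorem stmt_4 :
    Nonempty
      ((Circle × Multiplicative ℝ) ⧸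
          Subgroup.zpowers ((negOneCircle, Multiplicative.ofAdd Real.pi) :
            Circle × Multiplicative ℝ) ≃ₜ
        (Circle × Circle)) := by
  rw [← torusCover_ker]
  exact ⟨torusCover.quotientKerHomeomorph isQuotientMap_torusCover⟩
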